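/- If A is a finite lattice with at least two elements and C = Clo(A), then the relational structure ⟨A;C•⟩ is not polymorphism-homogeneous. -/
import Mathlib


/- Common framework: operations, relations, clones, preservation,
   primitive positive definability, polymorphism-homogeneity. -/

namespace PaperPH

/-- `Op A n` is the set of `n`-ary operations on `A`. -/
abbrev Op (A : Type*) (n : ℕ) := (Fin n → A) → A

/-- A family of operations on `A`, sorted by arity. -/
abbrev OpFamily (A : Type*) := ∀ n : ℕ, Set (Op A n)

/-- A family of relations on `A`, sorted by arity. -/
abbrev RelFamily (A : Type*) := ∀ n : ℕ, Set (Set (Fin n → A))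

variable {A : Type*}

/-- The `k`-ary partial operation given by the total map `h` together with domain `D`
preserves the `n`-ary relation `ρ`: for every `n × k` matrix all of whose rows lie in `D`
and all of whose columns lie in `ρ`, applying `h` to the rows yields a tuple in `ρ`. -/
def pPreserves {k n : ℕ} (D : Set (Fin k → A)) (h : Op A k) (ρ : Set (Fin n → A)) : Prop :=
  ∀ M : Fin n → Fin k → A,
    (∀ i, M i ∈ D) → (∀ j, (fun i => M i j) ∈ ρ) → (fun i => h (M i)) ∈ ρ

/-- `h` (with domain `D`) preserves every relation of the family `R`. -/
def pPreservesAll {k : ℕ} (D : Set (Fin k → A)) (h : Op A k) (R : RelFamily A) : Prop :=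
  ∀ n, ∀ ρ ∈ R n, pPreserves D h ρ

/-- The relational structure `⟨A; R⟩` is polymorphism-homogeneous: for every `k ≥ 1`,
every partial operation preserving all relations of `R` extends to a total operation
preserving all relations of `R`. -/
def RelPolyHom (R : RelFamily A) : Prop :=
  ∀ k, 1 ≤ k → ∀ (D : Set (Fin k → A)) (h : Op A k), pPreservesAll D h R →
    ∃ g : Op A k, (∀ x ∈ D, g x = h x) ∧ pPreservesAll Set.univ g R

/-- A family of operations is a clone if it contains all projections and is closed
under composition. -/
def IsClone (C : OpFamily A) : Prop :=
  (∀ (n : ℕ) (i : Fin n), (fun x => x i) ∈ C n) ∧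
  (∀ (n k : ℕ) (f : Op A n) (g : Fin n → Op A k),
    f ∈ C n → (∀ i, g i ∈ C k) → (fun x => f (fun i => g i x)) ∈ C k)

/-- The clone generated by a family `F` of operations; for an algebra with basic
operations `F` this is its clone `Clo(A)` of term operations. -/
def CloGen (F : OpFamily A) : OpFamily A :=
  fun n => { f | ∀ C : OpFamily A, IsClone C → (∀ m, F m ⊆ C m) → f ∈ C n }

/-- The graph `f•` of an `n`-ary operation `f`: the solution set of
`f(x_1,…,x_n) = x_{n+1}`. -/
def graphRel {n : ℕ} (f : Op A n) : Set (Fin (n + 1) → A) :=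
  { a | f (fun i => a i.castSucc) = a (Fin.last n) }

/-- `C•`: the family of graphs of the operations in `C`. -/
def Cdot (C : OpFamily A) : RelFamily A := fun m =>
  match m with
  | 0 => ∅
  | n + 1 => { ρ | ∃ f ∈ C n, ρ = graphRel f }

/-- `C°`: the family of solution sets `Sol(f,g) = {a | f(a) = g(a)}` of equations
between members of `C` of the same arity. -/
def Ccirc (C : OpFamily A) : RelFamily A := fun n =>
  { ρ | ∃ f ∈ C n, ∃ g ∈ C n, ρ = { a | f a = g a } }

/-- `Pol R`: all total operations preserving every relation in `R`. -/
def PolOps (R : RelFamily A) : OpFamily A := fun k =>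
  { h | pPreservesAll Set.univ h R }

/-- `Inv F`: all relations preserved by every operation in `F`. -/
def InvRels (F : OpFamily A) : RelFamily A := fun n =>
  { ρ | ∀ k, 1 ≤ k → ∀ h ∈ F k, pPreserves (Set.univ : Set (Fin k → A)) h ρ }

/-- `⟨R⟩_∄`: the relations definable by quantifier-free primitive positive formulas
over `R`, i.e. by conjunctions of atomic formulas `τ_i(x_{σ_i(1)},…,x_{σ_i(r_i)})`
with `τ_i ∈ R`. -/
def qfDef (R : RelFamily A) : RelFamily A := fun n =>
  { ρ | ∃ (t : ℕ) (r : Fin t → ℕ) (τ : ∀ i : Fin t, Set (Fin (r i) → A))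
      (σ : ∀ i : Fin t, Fin (r i) → Fin n),
      (∀ i, τ i ∈ R (r i)) ∧
      ρ = { a | ∀ i, (fun j => a (σ i j)) ∈ τ i } }

/-- `⟨R⟩_∃`: the relations definable by primitive positive formulas over `R`
(existentially quantified conjunctions of atomic formulas over `R`). -/
def ppDef (R : RelFamily A) : RelFamily A := fun n =>
  { ρ | ∃ (m t : ℕ) (r : Fin t → ℕ) (τ : ∀ i : Fin t, Set (Fin (r i) → A))
      (σ : ∀ i : Fin t, Fin (r i) → Fin (n + m)),
      (∀ i, τ i ∈ R (r i)) ∧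
      ρ = { a | ∃ b : Fin m → A, ∀ i, (fun j => Fin.append a b (σ i j)) ∈ τ i } }

/-- `B ⊆ A^k` is closed under the componentwise action of the operations in `C`,
i.e. `B` is a subalgebra (possibly empty) of the `k`-th power. -/
def ClosedUnder (C : OpFamily A) (k : ℕ) (B : Set (Fin k → A)) : Prop :=
  ∀ n, ∀ f ∈ C n, ∀ M : Fin n → Fin k → A,
    (∀ i, M i ∈ B) → (fun j => f (fun i => M i j)) ∈ B

/-- `h` is a homomorphism from the subalgebra `B ≤ A^k` to `A` (w.r.t. the
operations in `C`): it commutes with the componentwise action on tuples from `B`. -/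
def IsHomOn (C : OpFamily A) {k : ℕ} (B : Set (Fin k → A)) (h : Op A k) : Prop :=
  ∀ n, ∀ f ∈ C n, ∀ M : Fin n → Fin k → A, (∀ i, M i ∈ B) →
    h (fun j => f (fun i => M i j)) = f (fun i => h (M i))

/-- The algebra with clone of term operations `C` is polymorphism-homogeneous:
for every `k ≥ 1`, every homomorphism from a subalgebra of `A^k` to `A` extends
to a homomorphism `A^k → A`. -/
def AlgPolyHom (C : OpFamily A) : Prop :=
  ∀ k, 1 ≤ k → ∀ B : Set (Fin k → A), ClosedUnder C k B →
    ∀ h : Op A k, IsHomOn C B h →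
      ∃ g : Op A k, (∀ x ∈ B, g x = h x) ∧ IsHomOn C Set.univ g

/-- The algebra with clone of term operations `C` is homomorphism-homogeneous:
every homomorphism from a subalgebra of `A` to `A` extends to an endomorphism of `A`. -/
def AlgHomHom (C : OpFamily A) : Prop :=
  ∀ B : Set (Fin 1 → A), ClosedUnder C 1 B →
    ∀ h : Op A 1, IsHomOn C B h →
      ∃ g : Op A 1, (∀ x ∈ B, g x = h x) ∧ IsHomOn C Set.univ g

/-- Property (SDC): the algebraic sets (solution sets of systems of equations, i.e.
the quantifier-free pp definable relations over `C°`) are exactly the relations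
closed under the centralizer `C* = Pol C•`. -/
def SDC (C : OpFamily A) : Prop :=
  ∀ n, 1 ≤ n → qfDef (Ccirc C) n = InvRels (PolOps (Cdot C)) n

/-- The subalgebra of `A^k` generated by `S` (w.r.t. the operations of `C`). -/
def Gen (C : OpFamily A) (k : ℕ) (S : Set (Fin k → A)) : Set (Fin k → A) :=
  ⋂₀ { B | ClosedUnder C k B ∧ S ⊆ B }

/-- The algebra with clone of term operations `C` is injective in `SP_fin(A)`,
the class of subalgebras of finite direct powers of `A`: every homomorphism from
a subalgebra `B ≤ B' ≤ A^m` to `A` extends to a homomorphism `B' → A`. -/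
def InjSPfin (C : OpFamily A) : Prop :=
  ∀ m, 1 ≤ m → ∀ B B' : Set (Fin m → A), ClosedUnder C m B → ClosedUnder C m B' → B ⊆ B' →
    ∀ h : Op A m, IsHomOn C B h →
      ∃ g : Op A m, (∀ x ∈ B, g x = h x) ∧ IsHomOn C B' g

end PaperPH

open PaperPH

namespace PaperPH

/-- The basic operations of a lattice `(A; ⊔, ⊓)`: the two binary operations. -/
def latOps (A : Type*) [Lattice A] : OpFamily A := fun n =>
  match n with
  | 2 => ({ fun x => x 0 ⊔ x 1, fun x => x 0 ⊓ x 1 } : Set (Op A 2))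
  | _ => ∅

/-- The algebra `(B; supB, infB)` belongs to `HSP(A)`, the variety generated by the
lattice `A` (signature with two binary operation symbols): it is a homomorphic image
of a subalgebra of a direct power of `A`. -/
def InHSPlat.{u, v} (A : Type u) [Lattice A] (B : Type v) (supB infB : B → B → B) : Prop :=
  ∃ (I : Type v) (S : Set (I → A)) (π : (I → A) → B),
    (∀ x ∈ S, ∀ y ∈ S, (fun i => x i ⊔ y i) ∈ S) ∧
    (∀ x ∈ S, ∀ y ∈ S, (fun i => x i ⊓ y i) ∈ S) ∧
    (∀ x ∈ S, ∀ y ∈ S, π (fun i => x i ⊔ y i) = supB (π x) (π y)) ∧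
    (∀ x ∈ S, ∀ y ∈ S, π (fun i => x i ⊓ y i) = infB (π x) (π y)) ∧
    (∀ b : B, ∃ x ∈ S, π x = b)

/-- The lattice `A` is injective in the variety `HSP(A)`: for members `B ≤ C` of the
variety, every homomorphism `B → A` extends to a homomorphism `C → A`. -/
def InjHSPlat.{u, v} (A : Type u) [Lattice A] : Prop :=
  ∀ (B : Type v) (supB infB : B → B → B), InHSPlat A B supB infB →
    ∀ S : Set B, (∀ x ∈ S, ∀ y ∈ S, supB x y ∈ S ∧ infB x y ∈ S) →
      ∀ h : B → A, (∀ x ∈ S, ∀ y ∈ S, h (supB x y) = h x ⊔ h y ∧ h (infB x y) = h x ⊓ h y) →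
        ∃ g : B → A, (∀ x ∈ S, g x = h x) ∧
          ∀ x y : B, g (supB x y) = g x ⊔ g y ∧ g (infB x y) = g x ⊓ g y

/-- `A` is a finite Boolean lattice, i.e. isomorphic (as a lattice) to a finite direct
power of the two-element chain. -/
def IsFiniteBooleanLattice (A : Type*) [Lattice A] : Prop :=
  ∃ (n : ℕ) (φ : A ≃ (Fin n → Bool)),
    (∀ a b : A, φ (a ⊔ b) = φ a ⊔ φ b) ∧ (∀ a b : A, φ (a ⊓ b) = φ a ⊓ φ b)

end PaperPH


/- ======================= Auxiliary development ======================= -/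

namespace NPHaux

open PaperPH

/-- The four Boolean rows of our counterexample domain. -/
def d0b : Fin 4 → Fin 4 → Bool :=
  ![![false,false,false,true], ![false,false,true,false],
    ![false,true,true,true], ![true,false,true,true]]

/-- The partial operation's Boolean values on the four rows. -/
def h0b : Fin 4 → Bool := ![false,false,true,true]

set_option synthInstance.maxSize 2000 in
set_option synthInstance.maxHeartbeats 1000000 in
set_option maxHeartbeats 2000000 in
theorem key : ∀ (used : Fin 4 → Bool) (e : Fin 4),
    (∀ j j' : Fin 4, (∀ u, used u = true → d0b u j = true → d0b u j' = true) →
      d0b e j = true → d0b e j' = true) →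
    (∀ j : Fin 4, (∀ u, used u = true → d0b u j = true) → d0b e j = true) →
    (∀ j : Fin 4, (∀ u, used u = true → d0b u j = false) → d0b e j = false) →
    ((h0b e = true →
        (∀ u, used u = true → h0b u = true) ∨
        ∃ j, d0b e j = true ∧ ∀ u, used u = true → d0b u j = true → h0b u = true) ∧
     (h0b e = false →
        (∀ u, used u = true → h0b u = false) ∨
        ∃ j, d0b e j = false ∧ ∀ u, used u = true → h0b u = true → d0b u j = true)) := by
  decide

/-- Monotone idempotent operations. -/
def Pm (A : Type*) [Lattice A] : OpFamily A := fun n =>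
  { f | (∀ x y : Fin n → A, (∀ i, x i ≤ y i) → f x ≤ f y) ∧ ∀ a : A, f (fun _ => a) = a }

theorem Pm_isClone (A : Type*) [Lattice A] : IsClone (Pm A) := by
  constructor
  · intro n i
    exact ⟨fun x y h => h i, fun a => rfl⟩
  · intro n k f g hf hg
    refine ⟨fun x y hxy => hf.1 _ _ fun i => (hg i).1 x y hxy, fun a => ?_⟩
    show f (fun i => g i (fun _ => a)) = a
    have h1 : (fun i => g i (fun _ => a)) = fun _ => a := funext fun i => (hg i).2 a
    rw [h1]
    exact hf.2 a

theorem latOps_sub_Pm (A : Type*) [Lattice A] : ∀ m, latOps A m ⊆ Pm A m := by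
  intro m
  match m with
  | 2 =>
    intro f hf
    rcases hf with rfl | rfl
    · exact ⟨fun x y h => sup_le_sup (h 0) (h 1), fun a => sup_idem a⟩
    · exact ⟨fun x y h => inf_le_inf (h 0) (h 1), fun a => inf_idem a⟩
  | 0 => intro f hf; exact hf.elim
  | 1 => intro f hf; exact hf.elim
  | (n+3) => intro f hf; exact hf.elim

section Counterexample

variable {A : Type*} [Lattice A] (b t : A)

/-- Embedding of `Bool` as `{b, t}`. -/
def iot : Bool → A := fun v => if v then t else b

/-- The four rows as elements of `A^4`. -/
def dA : Fin 4 → Fin 4 → A := fun u j => iot b t (d0b u j)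

/-- The domain of the partial operation. -/
def Dset : Set (Fin 4 → A) := {x | ∃ u : Fin 4, x = dA b t u}

open Classical in
/-- The partial operation (as a total function; only values on `Dset` matter). -/
noncomputable def hOp : Op A 4 := fun x =>
  if x = dA b t 2 ∨ x = dA b t 3 then t else b

theorem iot_mono (hble : ∀ x : A, b ≤ x) (x y : Bool) (h : x = true → y = true) : iot b t x ≤ iot b t y := by
  cases x
  · cases y
    · exact le_rfl
    · exact hble _
  · rw [h rfl]

theorem iot_reflect (hble : ∀ x : A, b ≤ x) (hbt : b ≠ t) (x y : Bool) (h : iot b t x ≤ iot b t y) : x = true → y = true := by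
  intro hx
  subst hx
  cases y
  · exact absurd (le_antisymm (hble t) h) hbt
  · rfl

theorem iot_inj (hbt : b ≠ t) {x y : Bool} (h : iot b t x = iot b t y) : x = y := by
  cases x <;> cases y
  · rfl
  · exact absurd h hbt
  · exact absurd h.symm hbt
  · rfl

theorem iot_inf (hble : ∀ x : A, b ≤ x) (x y : Bool) : iot b t x ⊓ iot b t y = iot b t (x && y) := by
  cases x <;> cases y
  · exact inf_idem b
  · exact inf_eq_left.mpr (hble t)
  · exact inf_eq_right.mpr (hble t)
  · exact inf_idem t

theorem iot_sup (hble : ∀ x : A, b ≤ x) (x y : Bool) : iot b t x ⊔ iot b t y = iot b t (x || y) := by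
  cases x <;> cases y
  · exact sup_idem b
  · exact sup_eq_right.mpr (hble t)
  · exact sup_eq_left.mpr (hble t)
  · exact sup_idem t

theorem dA_inj (hbt : b ≠ t) {u u' : Fin 4} (h : dA b t u = dA b t u') : u = u' := by
  by_contra hne
  have hx : ∀ v v' : Fin 4, v ≠ v' → ∃ j, d0b v j ≠ d0b v' j := by decide
  obtain ⟨j, hj⟩ := hx u u' hne
  exact hj (iot_inj b t hbt (congrFun h j))

theorem hOp_val (hbt : b ≠ t) (u : Fin 4) : hOp b t (dA b t u) = iot b t (h0b u) := by
  unfold hOp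
  by_cases hcase : dA b t u = dA b t 2 ∨ dA b t u = dA b t 3
  · rw [if_pos hcase]
    rcases hcase with hE | hE
    · rw [dA_inj b t hbt hE, show h0b 2 = true from by decide]
      rfl
    · rw [dA_inj b t hbt hE, show h0b 3 = true from by decide]
      rfl
  · rw [if_neg hcase]
    have hu2 : u ≠ 2 := fun hE => hcase (Or.inl (by rw [hE]))
    have hu3 : u ≠ 3 := fun hE => hcase (Or.inr (by rw [hE]))
    have hval : h0b u = false := by revert hu2 hu3; fin_cases u <;> decide
    rw [hval]
    rfl

theorem main_pres (hble : ∀ x : A, b ≤ x) (hlet : ∀ x : A, x ≤ t) (hbt : b ≠ t) :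
    pPreservesAll (Dset b t) (hOp b t) (Cdot (CloGen (latOps A))) := by
  intro n ρ hρ
  cases n with
  | zero => exact hρ.elim
  | succ m =>
    obtain ⟨f, hfC, rfl⟩ := hρ
    intro M hrows hcols
    obtain ⟨fmono, fidem⟩ := hfC (Pm A) (Pm_isClone A) (latOps_sub_Pm A)
    choose idx hidx using hrows
    have hcol : ∀ j, f (fun i => M i.castSucc j) = M (Fin.last m) j := fun j => hcols j
    classical
    set e := idx (Fin.last m) with he
    have hMlast : M (Fin.last m) = dA b t e := hidx (Fin.last m)
    set used : Fin 4 → Bool := fun u => decide (∃ i : Fin m, idx i.castSucc = u) with hused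
    have husedIff : ∀ u, used u = true ↔ ∃ i : Fin m, idx i.castSucc = u := by
      intro u
      simp [hused]
    have H1 : ∀ j j' : Fin 4, (∀ u, used u = true → d0b u j = true → d0b u j' = true) →
        d0b e j = true → d0b e j' = true := by
      intro j j' hcmp
      have hle : f (fun i => M i.castSucc j) ≤ f (fun i => M i.castSucc j') := by
        apply fmono
        intro i
        rw [hidx i.castSucc]
        exact iot_mono b t hble _ _ (hcmp (idx i.castSucc) ((husedIff _).mpr ⟨i, rfl⟩))
      rw [hcol j, hcol j', hMlast] at hle
      exact iot_reflect b t hble hbt _ _ hle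
    have H2 : ∀ j : Fin 4, (∀ u, used u = true → d0b u j = true) → d0b e j = true := by
      intro j hall
      have hct : (fun i : Fin m => M i.castSucc j) = fun _ => t := by
        funext i
        rw [hidx i.castSucc]
        show iot b t (d0b (idx i.castSucc) j) = t
        rw [hall (idx i.castSucc) ((husedIff _).mpr ⟨i, rfl⟩)]
        rfl
      have hft : f (fun i => M i.castSucc j) = t := by rw [hct]; exact fidem t
      rw [hcol j, hMlast] at hft
      cases hEj : d0b e j
      · exfalso
        have : iot b t false = t := by rw [← hEj]; exact hft
        exact hbt this
      · rfl
    have H3 : ∀ j : Fin 4, (∀ u, used u = true → d0b u j = false) → d0b e j = false := by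
      intro j hall
      have hct : (fun i : Fin m => M i.castSucc j) = fun _ => b := by
        funext i
        rw [hidx i.castSucc]
        show iot b t (d0b (idx i.castSucc) j) = b
        rw [hall (idx i.castSucc) ((husedIff _).mpr ⟨i, rfl⟩)]
        rfl
      have hfb : f (fun i => M i.castSucc j) = b := by rw [hct]; exact fidem b
      rw [hcol j, hMlast] at hfb
      cases hEj : d0b e j
      · rfl
      · exfalso
        have : iot b t true = b := by rw [← hEj]; exact hfb
        exact hbt this.symm
    have hkey := key used e H1 H2 H3
    show f (fun i => hOp b t (M i.castSucc)) = hOp b t (M (Fin.last m))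
    have hv : ∀ i : Fin m, hOp b t (M i.castSucc) = iot b t (h0b (idx i.castSucc)) := by
      intro i
      rw [hidx i.castSucc]
      exact hOp_val b t hbt _
    rw [hMlast, hOp_val b t hbt e]
    cases hEe : h0b e
    · obtain hall | ⟨j, hej, hcmp⟩ := hkey.2 hEe
      · have hcb : (fun i : Fin m => hOp b t (M i.castSucc)) = fun _ => b := by
          funext i
          rw [hv i, hall (idx i.castSucc) ((husedIff _).mpr ⟨i, rfl⟩)]
          rfl
        rw [hcb]
        exact fidem b
      · have h1 : f (fun i => hOp b t (M i.castSucc)) ≤ f (fun i => M i.castSucc j) := by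
          apply fmono
          intro i
          rw [hv i, hidx i.castSucc]
          exact iot_mono b t hble _ _ (hcmp (idx i.castSucc) ((husedIff _).mpr ⟨i, rfl⟩))
        rw [hcol j, hMlast] at h1
        have h2 : dA b t e j = b := by
          show iot b t (d0b e j) = b
          rw [hej]
          rfl
        rw [h2] at h1
        exact le_antisymm h1 (hble _)
    · obtain hall | ⟨j, hej, hcmp⟩ := hkey.1 hEe
      · have hct : (fun i : Fin m => hOp b t (M i.castSucc)) = fun _ => t := by
          funext i
          rw [hv i, hall (idx i.castSucc) ((husedIff _).mpr ⟨i, rfl⟩)]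
          rfl
        rw [hct]
        exact fidem t
      · have h1 : f (fun i => M i.castSucc j) ≤ f (fun i => hOp b t (M i.castSucc)) := by
          apply fmono
          intro i
          rw [hv i, hidx i.castSucc]
          exact iot_mono b t hble _ _ (hcmp (idx i.castSucc) ((husedIff _).mpr ⟨i, rfl⟩))
        rw [hcol j, hMlast] at h1
        have h2 : dA b t e j = t := by
          show iot b t (d0b e j) = t
          rw [hej]
          rfl
        rw [h2] at h1
        exact le_antisymm (hlet _) h1

end Counterexample

end NPHaux


/-- If `A` is a finite lattice with at least two elements and
`C = Clo(A)`, then the relational structure `⟨A;C•⟩` is not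
polymorphism-homogeneous. -/
theorem nontrivial_lattice_Cdot_not_polyHom (A : Type*) [Fintype A] [Lattice A]
    (hA : 2 ≤ Fintype.card A)
    (C : OpFamily A) (hC : C = CloGen (latOps A)) :
    ¬ RelPolyHom (Cdot C) := by
  subst hC
  intro hPH
  haveI : Nontrivial A := Fintype.one_lt_card_iff_nontrivial.mp hA
  have hne : (Finset.univ : Finset A).Nonempty := Finset.univ_nonempty
  set b := Finset.univ.inf' hne (id : A → A) with hbdef
  set t := Finset.univ.sup' hne (id : A → A) with htdef
  have hble : ∀ x : A, b ≤ x := fun x => Finset.inf'_le id (Finset.mem_univ x)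
  have hlet : ∀ x : A, x ≤ t := fun x => Finset.le_sup' id (Finset.mem_univ x)
  have hbt : b ≠ t := by
    intro hE
    obtain ⟨x, y, hxy⟩ := exists_pair_ne A
    exact hxy (le_antisymm ((hlet x).trans (hE ▸ hble y)) ((hlet y).trans (hE ▸ hble x)))
  obtain ⟨g, hgD, hgAll⟩ := hPH 4 (by norm_num) (NPHaux.Dset b t) (NPHaux.hOp b t)
    (NPHaux.main_pres b t hble hlet hbt)
  have hsupC : (fun z : Fin 2 → A => z 0 ⊔ z 1) ∈ CloGen (latOps A) 2 :=
    fun Cl _ hsub => hsub 2 (Or.inl rfl)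
  have hinfC : (fun z : Fin 2 → A => z 0 ⊓ z 1) ∈ CloGen (latOps A) 2 :=
    fun Cl _ hsub => hsub 2 (Or.inr rfl)
  have hgsup : ∀ x y : Fin 4 → A, g (fun j => x j ⊔ y j) = g x ⊔ g y := by
    intro x y
    have hmem : graphRel (fun z : Fin 2 → A => z 0 ⊔ z 1) ∈ Cdot (CloGen (latOps A)) 3 :=
      ⟨_, hsupC, rfl⟩
    have h3 := hgAll 3 _ hmem ![x, y, fun j => x j ⊔ y j]
      (fun _ => Set.mem_univ _) (fun j => rfl)
    exact h3.symm
  have hginf : ∀ x y : Fin 4 → A, g (fun j => x j ⊓ y j) = g x ⊓ g y := by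
    intro x y
    have hmem : graphRel (fun z : Fin 2 → A => z 0 ⊓ z 1) ∈ Cdot (CloGen (latOps A)) 3 :=
      ⟨_, hinfC, rfl⟩
    have h3 := hgAll 3 _ hmem ![x, y, fun j => x j ⊓ y j]
      (fun _ => Set.mem_univ _) (fun j => rfl)
    exact h3.symm
  have hgval : ∀ u : Fin 4, g (NPHaux.dA b t u) = NPHaux.iot b t (NPHaux.h0b u) := by
    intro u
    rw [hgD _ ⟨u, rfl⟩]
    exact NPHaux.hOp_val b t hbt u
  have hw : (fun j => NPHaux.dA b t 2 j ⊓ NPHaux.dA b t 3 j)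
      = (fun j => NPHaux.dA b t 0 j ⊔ NPHaux.dA b t 1 j) := by
    funext j
    have hbool : (NPHaux.d0b 2 j && NPHaux.d0b 3 j) = (NPHaux.d0b 0 j || NPHaux.d0b 1 j) := by
      fin_cases j <;> decide
    calc NPHaux.dA b t 2 j ⊓ NPHaux.dA b t 3 j
        = NPHaux.iot b t (NPHaux.d0b 2 j && NPHaux.d0b 3 j) := NPHaux.iot_inf b t hble _ _
      _ = NPHaux.iot b t (NPHaux.d0b 0 j || NPHaux.d0b 1 j) := by rw [hbool]
      _ = NPHaux.dA b t 0 j ⊔ NPHaux.dA b t 1 j := (NPHaux.iot_sup b t hble _ _).symm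
  have h1 : g (fun j => NPHaux.dA b t 2 j ⊓ NPHaux.dA b t 3 j) = t := by
    rw [hginf, hgval 2, hgval 3, show NPHaux.h0b 2 = true from by decide,
      show NPHaux.h0b 3 = true from by decide]
    exact inf_idem t
  rw [hw, hgsup, hgval 0, hgval 1, show NPHaux.h0b 0 = false from by decide,
    show NPHaux.h0b 1 = false from by decide] at h1
  have h2 : NPHaux.iot b t false ⊔ NPHaux.iot b t false = b := sup_idem b
  rw [h2] at h1
  exact hbt h1
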